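/- Let F(y) = \sum_{i=1}^k w_i e^{a_i y + (1/2) b_i y^2} and \tilde{F}(y) = \sum_{i=1}^k \tilde{w}_i e^{\tilde{a}_i y + (1/2) \tilde{b}_i y^2} be formal power series in y over a commutative Q-algebra, and suppose the b_i are pairwise distinct and the \tilde{b}_i are pairwise distinct. Define D_i = \partial_y - (a_i + y b_i) and \tilde{D}_i = \partial_y - (\tilde{a}_i + y \tilde{b}_i). Then evaluating \tilde{D}_k^{2^{2k-1}-1} \tilde{D}_{k-1}^{2^{2k-2}} \cdots \tilde{D}_1^{2^k} D_k^{2^{k-1}} \cdots D_1^{1} (\tilde{F}) at y = 0 gives C_k · \tilde{w}_k · \prod_{i=1}^k (\tilde{b}_k - b_i)^{2^{i-1}} · \prod_{i=1}^{k-1} (\tilde{b}_k - \tilde{b}_i)^{2^{k+i-1}}, where C_k = (2^{2k-1}-1)! depends only on k. -/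

import Mathlib

/-!
Conjugation by the exponential shifts the operators:
`D_{d,c} (P · e^{a y + b y²/2}) = D_{d-a,c-b} P · e^{a y + b y²/2}`, so each operator acts on
the polynomial prefactor of a term of `F̃` as `∂_y - (d - a) - (c - b) y`. If `c ≠ b` this
raises the degree by one and multiplies the leading coefficient by `b - c`; if `(d, c) = (a, b)`
it is plain differentiation. The `i`-th term meets its own operator `D̃_i^{2^{k+i-1}}` with a
prefactor of degree `2^{k+i-1} - 1`, which is therefore annihilated unless `i = k`; for `i = k`
the final `2^{2k-1} - 1` derivatives turn the prefactor, of exactly that degree, into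
`(2^{2k-1} - 1)!` times its leading coefficient.
-/

open PowerSeries

variable {R : Type*} [CommRing R] [Algebra ℚ R]

/-- Coefficients of the formal power series `e^{a y + (1/2) b y²}` in `y`. -/
noncomputable def expCoeff (a b : R) : ℕ → R
  | 0 => 1
  | 1 => a
  | (n + 2) => algebraMap ℚ R (((n : ℚ) + 2)⁻¹) *
      (a * expCoeff a b (n + 1) + b * expCoeff a b n)

/-- The formal power series `e^{a y + (1/2) b y²}` in `y`. -/
noncomputable def expAB (a b : R) : PowerSeries R := PowerSeries.mk (expCoeff a b)

/-- The differential operator `D = ∂_y - (a + y b)` on formal power series in `y`. -/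
noncomputable def Dop (a b : R) (f : PowerSeries R) : PowerSeries R :=
  f.derivativeFun - (PowerSeries.C a + PowerSeries.X * PowerSeries.C b) * f

/-- `iterOpsE D e n = (D_{n-1})^{e(n-1)} ∘ ⋯ ∘ (D_0)^{e(0)}` (0-indexed, applied
rightmost-first). -/
noncomputable def iterOpsE {M : Type*} (D : ℕ → M → M) (e : ℕ → ℕ) : ℕ → M → M
  | 0 => id
  | (n + 1) => (D n)^[e n] ∘ iterOpsE D e n

section IterOps

variable {M : Type*}

theorem Function.Semiconj.iterOpsE {N : Type*} {g : M → N} {L : ℕ → M → M}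
    {D : ℕ → N → N} (h : ∀ j, Function.Semiconj g (L j) (D j)) (e : ℕ → ℕ) (n : ℕ) :
    Function.Semiconj g (iterOpsE L e n) (iterOpsE D e n) := by
  induction n with
  | zero => exact Function.Semiconj.id_right
  | succ n ih => exact ((h n).iterate_right (e n)).comp_right ih

theorem iterOpsE_eq_zero_of_le [Zero M] {D : ℕ → M → M} (hD : ∀ j, D j 0 = 0)
    (e : ℕ → ℕ) {m n : ℕ} (hmn : m ≤ n) {x : M} (hx : iterOpsE D e m x = 0) :
    iterOpsE D e n x = 0 := by
  induction n, hmn using Nat.le_induction with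
  | base => exact hx
  | succ n _ ih =>
    simp only [iterOpsE, Function.comp_apply, ih]
    exact Function.iterate_fixed (hD n) (e n)

theorem iterOpsE_map_add [AddCommGroup M] {D : ℕ → M → M}
    (hD : ∀ j x y, D j (x + y) = D j x + D j y) (e : ℕ → ℕ) (n : ℕ) (x y : M) :
    iterOpsE D e n (x + y) = iterOpsE D e n x + iterOpsE D e n y := by
  induction n with
  | zero => rfl
  | succ n ih =>
    simp only [iterOpsE, Function.comp_apply, ih]
    exact iterate_map_add (AddMonoidHom.mk' (D n) (hD n)) (e n) _ _

theorem iterOpsE_map_sum [AddCommGroup M] {D : ℕ → M → M}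
    (hD : ∀ j x y, D j (x + y) = D j x + D j y) (e : ℕ → ℕ) (n : ℕ) {ι : Type*}
    (s : Finset ι) (f : ι → M) :
    iterOpsE D e n (∑ i ∈ s, f i) = ∑ i ∈ s, iterOpsE D e n (f i) :=
  map_sum (AddMonoidHom.mk' _ (iterOpsE_map_add hD e n)) f s

theorem iterate_map_sum_of_add [AddCommGroup M] {D : M → M}
    (hD : ∀ x y, D (x + y) = D x + D y) (t : ℕ) {ι : Type*} (s : Finset ι) (f : ι → M) :
    D^[t] (∑ i ∈ s, f i) = ∑ i ∈ s, D^[t] (f i) :=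
  map_sum (AddMonoidHom.mk' D^[t] (iterate_map_add (AddMonoidHom.mk' D hD) t)) f s

end IterOps

section PolynomialPrefactor

variable {A : Type*} [CommRing A]

theorem Dop_apply (a b : A) (f : A⟦X⟧) : Dop a b f = d⁄dX A f - (C a + X * C b) * f := rfl

theorem Dop_add (a b : A) (f g : A⟦X⟧) : Dop a b (f + g) = Dop a b f + Dop a b g := by
  simp only [Dop_apply, map_add]
  ring

theorem Dop_map_zero (a b : A) : Dop a b 0 = 0 := by
  simp [Dop_apply]

theorem Dop_zero_zero : Dop (0 : A) 0 = d⁄dX A := by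
  ext1 f
  simp [Dop_apply]

theorem coeff_succ_Dop (a b : A) (f : A⟦X⟧) (m : ℕ) :
    coeff (m + 1) (Dop a b f)
      = coeff (m + 2) f * (m + 2) - a * coeff (m + 1) f - b * coeff m f := by
  rw [Dop_apply, map_sub, coeff_derivative, add_mul, map_add, coeff_C_mul, mul_assoc,
    coeff_succ_X_mul, coeff_C_mul]
  push_cast
  ring

def DegreeLE (n : ℕ) (f : A⟦X⟧) : Prop := ∀ m, n < m → coeff m f = 0

theorem degreeLE_C (r : A) : DegreeLE 0 (C r) := fun m hm => by
  rw [coeff_C, if_neg hm.ne']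

namespace DegreeLE

variable {n : ℕ} {f : A⟦X⟧}

theorem map_Dop (h : DegreeLE n f) (a b : A) : DegreeLE (n + 1) (Dop a b f) := by
  rintro (_ | m) hm
  · omega
  · rw [coeff_succ_Dop, h _ (by omega), h _ (by omega), h _ (by omega)]
    ring

theorem coeff_Dop (h : DegreeLE n f) (a b : A) :
    coeff (n + 1) (Dop a b f) = -b * coeff n f := by
  rw [coeff_succ_Dop, h _ (by omega), h _ (by omega)]
  ring

theorem iterate_Dop (h : DegreeLE n f) (a b : A) (t : ℕ) :
    DegreeLE (n + t) ((Dop a b)^[t] f) := by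
  induction t with
  | zero => exact h
  | succ t ih => rw [Function.iterate_succ_apply']; exact ih.map_Dop a b

theorem coeff_iterate_Dop (h : DegreeLE n f) (a b : A) (t : ℕ) :
    coeff (n + t) ((Dop a b)^[t] f) = (-b) ^ t * coeff n f := by
  induction t with
  | zero => simp
  | succ t ih =>
    rw [Function.iterate_succ_apply', ← add_assoc, (h.iterate_Dop a b t).coeff_Dop, ih, pow_succ]
    ring

theorem iterOpsE_Dop (h : DegreeLE n f) (a b : ℕ → A) (e : ℕ → ℕ) (m : ℕ) :
    DegreeLE (n + ∑ j ∈ Finset.range m, e j) (iterOpsE (fun j => Dop (a j) (b j)) e m f) := by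
  induction m with
  | zero => simpa [iterOpsE] using h
  | succ m ih =>
    rw [Finset.sum_range_succ, ← add_assoc]
    exact ih.iterate_Dop (a m) (b m) (e m)

theorem coeff_iterOpsE_Dop (h : DegreeLE n f) (a b : ℕ → A) (e : ℕ → ℕ) (m : ℕ) :
    coeff (n + ∑ j ∈ Finset.range m, e j) (iterOpsE (fun j => Dop (a j) (b j)) e m f)
      = (∏ j ∈ Finset.range m, (-b j) ^ e j) * coeff n f := by
  induction m with
  | zero => simp [iterOpsE]
  | succ m ih =>
    rw [Finset.sum_range_succ, ← add_assoc, Finset.prod_range_succ, iterOpsE,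
      Function.comp_apply, (h.iterOpsE_Dop a b e m).coeff_iterate_Dop, ih]
    ring

theorem iterate_derivative_eq_zero (h : DegreeLE n f) {t : ℕ} (ht : n < t) :
    (d⁄dX A)^[t] f = 0 := by
  ext m
  rw [coeff_iterate_derivative, h _ (by omega), mul_zero, map_zero]

theorem iterOpsE_Dop_eq_zero (h : DegreeLE n f) {a b : ℕ → A} (e : ℕ → ℕ) {i m : ℕ}
    (him : i < m) (ha : a i = 0) (hb : b i = 0) (hlt : n + ∑ j ∈ Finset.range i, e j < e i) :
    iterOpsE (fun j => Dop (a j) (b j)) e m f = 0 := by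
  refine iterOpsE_eq_zero_of_le (fun j => Dop_map_zero _ _) e him ?_
  rw [iterOpsE, Function.comp_apply, ha, hb, Dop_zero_zero]
  exact (h.iterOpsE_Dop a b e i).iterate_derivative_eq_zero hlt

end DegreeLE

end PolynomialPrefactor

theorem coeff_expAB_add_two (a b : R) (n : ℕ) :
    coeff (n + 2) (expAB a b) * (n + 2)
      = a * coeff (n + 1) (expAB a b) + b * coeff n (expAB a b) := by
  have hn : ((n : ℚ) + 2) ≠ 0 := by positivity
  simp only [expAB, coeff_mk, expCoeff]
  rw [mul_comm, ← mul_assoc, show ((n : R) + 2) = algebraMap ℚ R ((n : ℚ) + 2) by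
      rw [map_add, map_natCast, map_ofNat],
    ← map_mul, mul_inv_cancel₀ hn, map_one, one_mul]

theorem derivative_expAB (a b : R) :
    d⁄dX R (expAB a b) = (C a + X * C b) * expAB a b := by
  ext (_ | n)
  · simp [coeff_derivative, expAB, expCoeff]
  · rw [coeff_derivative, add_mul, map_add, coeff_C_mul, mul_assoc, coeff_succ_X_mul,
      coeff_C_mul]
    push_cast
    rw [show ((n : R) + 1 + 1) = n + 2 by ring, coeff_expAB_add_two]

theorem constantCoeff_expAB (a b : R) : constantCoeff (expAB a b) = 1 := by
  simp [← coeff_zero_eq_constantCoeff_apply, expAB, expCoeff]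

theorem Dop_mul_expAB (a b d c : R) (f : R⟦X⟧) :
    Dop d c (f * expAB a b) = Dop (d - a) (c - b) f * expAB a b := by
  simp only [Dop_apply, Derivation.leibniz, derivative_expAB, smul_eq_mul, map_sub]
  ring

theorem semiconj_mul_expAB (a b d c : R) :
    Function.Semiconj (· * expAB a b) (Dop (d - a) (c - b)) (Dop d c) :=
  fun f => (Dop_mul_expAB a b d c f).symm

theorem iterate_Dop_mul_expAB (a b d c : R) (t : ℕ) (f : R⟦X⟧) :
    (Dop d c)^[t] (f * expAB a b) = (Dop (d - a) (c - b))^[t] f * expAB a b :=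
  ((semiconj_mul_expAB a b d c).iterate_right t f).symm

theorem iterOpsE_Dop_mul_expAB (a b : R) (d c : ℕ → R) (e : ℕ → ℕ) (n : ℕ)
    (f : R⟦X⟧) :
    iterOpsE (fun j => Dop (d j) (c j)) e n (f * expAB a b)
      = iterOpsE (fun j => Dop (d j - a) (c j - b)) e n f * expAB a b :=
  (Function.Semiconj.iterOpsE (fun j => semiconj_mul_expAB a b (d j) (c j)) e n f).symm

theorem sum_range_two_pow_add (c m : ℕ) :
    ∑ j ∈ Finset.range c, 2 ^ j + ∑ j ∈ Finset.range m, 2 ^ (c + j) = 2 ^ (c + m) - 1 := by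
  rw [← Finset.sum_range_add]
  simpa using Nat.geomSum_eq le_rfl (c + m)

theorem stmt13_general (k : ℕ) (hk : 1 ≤ k) (a b tw ta tb : ℕ → R) :
    PowerSeries.constantCoeff
      ((Dop (ta (k - 1)) (tb (k - 1)))^[2 ^ (2 * k - 1) - 1]
        (iterOpsE (fun i => Dop (ta i) (tb i)) (fun i => 2 ^ (k + i)) (k - 1)
          (iterOpsE (fun i => Dop (a i) (b i)) (fun i => 2 ^ i) k
            (∑ i ∈ Finset.range k, PowerSeries.C (tw i) * expAB (ta i) (tb i)))))
    = ((2 ^ (2 * k - 1) - 1).factorial : R) * tw (k - 1)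
        * (∏ i ∈ Finset.range k, (tb (k - 1) - b i) ^ (2 ^ i))
        * (∏ i ∈ Finset.range (k - 1), (tb (k - 1) - tb i) ^ (2 ^ (k + i))) := by
  obtain ⟨n, rfl⟩ : ∃ n, k = n + 1 := ⟨k - 1, by omega⟩
  have hdeg (m : ℕ) :
      0 + ∑ j ∈ Finset.range (n + 1), 2 ^ j + ∑ j ∈ Finset.range m, 2 ^ (n + 1 + j)
        = 2 ^ (n + 1 + m) - 1 := by
    rw [zero_add, sum_range_two_pow_add]
  have hstage (i : ℕ) : DegreeLE (0 + ∑ j ∈ Finset.range (n + 1), 2 ^ j)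
      (iterOpsE (fun j => Dop (a j - ta i) (b j - tb i)) (fun j => 2 ^ j) (n + 1) (C (tw i))) :=
    (degreeLE_C (tw i)).iterOpsE_Dop _ _ _ _
  -- `2 ^ (2k - 1) - 1` is the degree the `k`-th prefactor reaches before the last block
  rw [Nat.add_sub_cancel, show 2 * (n + 1) - 1 = n + 1 + n by omega, ← hdeg n,
    iterOpsE_map_sum (fun j => Dop_add (a j) (b j)),
    iterOpsE_map_sum (fun j => Dop_add (ta j) (tb j)),
    iterate_map_sum_of_add (Dop_add (ta n) (tb n)), map_sum]
  simp only [iterOpsE_Dop_mul_expAB, iterate_Dop_mul_expAB, map_mul, constantCoeff_expAB, mul_one]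
  rw [Finset.sum_eq_single_of_mem n (Finset.self_mem_range_succ n)]
  · rw [sub_self, sub_self, Dop_zero_zero, constantCoeff_iterate_derivative,
      (hstage n).coeff_iterOpsE_Dop, (degreeLE_C _).coeff_iterOpsE_Dop, coeff_zero_C]
    simp only [neg_sub]
    ring
  · intro i hi hin
    have hin' : i < n := lt_of_le_of_ne (Nat.lt_succ_iff.1 (Finset.mem_range.1 hi)) hin
    have hlt := Nat.sub_lt (Nat.two_pow_pos (n + 1 + i)) Nat.one_pos
    rw [← hdeg] at hlt
    rw [(hstage i).iterOpsE_Dop_eq_zero _ hin' (sub_self _) (sub_self _) hlt,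
      Function.iterate_fixed (Dop_map_zero _ _), map_zero]

/-- Evaluating `D̃_k^{2^{2k-1}-1} D̃_{k-1}^{2^{2k-2}} ⋯ D̃_1^{2^k} D_k^{2^{k-1}} ⋯ D_1^{1} (F̃)`
at `y = 0` (i.e. taking the constant coefficient) gives
`C_k · w̃_k · ∏_{i=1}^k (b̃_k - b_i)^{2^{i-1}} · ∏_{i=1}^{k-1} (b̃_k - b̃_i)^{2^{k+i-1}}`
with `C_k = (2^{2k-1}-1)!`, assuming the `b_i` are pairwise distinct and the `b̃_i` are
pairwise distinct.  (Components here are 0-indexed: component `i-1` is the `i`-th one.) -/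
theorem stmt13 (k : ℕ) (hk : 1 ≤ k) (w a b tw ta tb : ℕ → R)
    (hb : ∀ i j, i < k → j < k → i ≠ j → b i ≠ b j)
    (htb : ∀ i j, i < k → j < k → i ≠ j → tb i ≠ tb j) :
    PowerSeries.constantCoeff
      ((Dop (ta (k - 1)) (tb (k - 1)))^[2 ^ (2 * k - 1) - 1]
        (iterOpsE (fun i => Dop (ta i) (tb i)) (fun i => 2 ^ (k + i)) (k - 1)
          (iterOpsE (fun i => Dop (a i) (b i)) (fun i => 2 ^ i) k
            (∑ i ∈ Finset.range k, PowerSeries.C (tw i) * expAB (ta i) (tb i)))))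
    = ((2 ^ (2 * k - 1) - 1).factorial : R) * tw (k - 1)
        * (∏ i ∈ Finset.range k, (tb (k - 1) - b i) ^ (2 ^ i))
        * (∏ i ∈ Finset.range (k - 1), (tb (k - 1) - tb i) ^ (2 ^ (k + i))) :=
  stmt13_general k hk a b tw ta tb
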